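/- arXiv:0708.3871 — 2 statements merged into one kernel-verified Lean document; each statement's English description precedes it below -/
import Mathlib

section
/- Let G be a locally compact NSS local group and 𝒰 a special neighborhood of G with 𝒰 ⊆ U₆. With the topology on L(G) generated by the subbasis B_{C,U}, the set 𝒦 is a compact neighborhood of O in L(G), and the map E : 𝒦 → K defined by E(𝕏) := 𝕏(1) is a bijection and a homeomorphism onto K. -/
open scoped Topology Manifold ENNReal

/-- A local group in the sense of Goldbring's "Hilbert's Fifth Problem for Local Groups":
a Hausdorff-intended topological space `G` with a distinguished element `one`, a partial
inversion `inv` defined (i.e. meaningful) on the open set `Lambda`, and a partial product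
`mul` meaningful on the open set `Omega`. -/
structure LocalGroup (G : Type*) [TopologicalSpace G] where
  one : G
  Lambda : Set G
  Omega : Set (G × G)
  inv : G → G
  mul : G → G → G
  isOpen_Lambda : IsOpen Lambda
  isOpen_Omega : IsOpen Omega
  one_mem_Lambda : one ∈ Lambda
  pair_one_left : ∀ x : G, (one, x) ∈ Omega
  pair_one_right : ∀ x : G, (x, one) ∈ Omega
  continuousOn_inv : ContinuousOn inv Lambda
  continuousOn_mul : ContinuousOn (fun q : G × G => mul q.1 q.2) Omega
  one_mul : ∀ x : G, mul one x = x
  mul_one : ∀ x : G, mul x one = x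
  mem_inv_right : ∀ x ∈ Lambda, (x, inv x) ∈ Omega
  mem_inv_left : ∀ x ∈ Lambda, (inv x, x) ∈ Omega
  mul_inv_self : ∀ x ∈ Lambda, mul x (inv x) = one
  inv_mul_self : ∀ x ∈ Lambda, mul (inv x) x = one
  assoc : ∀ x y z : G, (x, y) ∈ Omega → (y, z) ∈ Omega → (mul x y, z) ∈ Omega →
    (x, mul y z) ∈ Omega → mul (mul x y) z = mul x (mul y z)

namespace LocalGroup

variable {G : Type*} {G' : Type*} [TopologicalSpace G] [TopologicalSpace G']

/-- The standing conventions of the paper: `Λ = G`, and whenever `(g,h) ∈ Ω` also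
`(h⁻¹, g⁻¹) ∈ Ω` with `(gh)⁻¹ = h⁻¹g⁻¹`. -/
def Std (L : LocalGroup G) : Prop :=
  L.Lambda = Set.univ ∧
    ∀ g h : G, (g, h) ∈ L.Omega →
      (L.inv h, L.inv g) ∈ L.Omega ∧ L.inv (L.mul g h) = L.mul (L.inv h) (L.inv g)

/-- A symmetric subset: contained in the domain of inversion and stable under it. -/
def IsSymmetric (L : LocalGroup G) (S : Set G) : Prop :=
  S ⊆ L.Lambda ∧ L.inv '' S = S

/-- A subgroup of a local group. -/
def IsSubgroup (L : LocalGroup G) (H : Set G) : Prop :=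
  L.one ∈ H ∧ H ⊆ L.Lambda ∧ (∀ x ∈ H, ∀ y ∈ H, (x, y) ∈ L.Omega) ∧
    (∀ x ∈ H, L.inv x ∈ H) ∧ ∀ x ∈ H, ∀ y ∈ H, L.mul x y ∈ H

/-- No small subgroups. -/
def NSS (L : LocalGroup G) : Prop :=
  ∃ U ∈ 𝓝 L.one, ∀ H : Set G, L.IsSubgroup H → H ⊆ U → H = {L.one}

/-- No small connected subgroups. -/
def NSCS (L : LocalGroup G) : Prop :=
  ∃ U ∈ 𝓝 L.one, ∀ H : Set G, L.IsSubgroup H → IsConnected H → H ⊆ U → H = {L.one}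

/-- `(a₁, …, aₙ)` represents `b`: all ways of multiplying the list are defined and equal `b`.
By convention the empty list represents `one`. -/
def Represents (L : LocalGroup G) : List G → G → Prop
  | [], b => b = L.one
  | [a], b => b = a
  | a :: c :: l, b =>
      ∀ i : ℕ, 1 ≤ i → i < (a :: c :: l).length →
        ∃ b₁ b₂ : G, L.Represents ((a :: c :: l).take i) b₁ ∧
          L.Represents ((a :: c :: l).drop i) b₂ ∧ (b₁, b₂) ∈ L.Omega ∧ L.mul b₁ b₂ = b
termination_by l => l.length
decreasing_by
  all_goals simp only [List.length_cons, List.length_take, List.length_drop] at *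
  all_goals omega

/-- `A^n`: all products of `n` elements of `A` (only meaningful when such products are defined). -/
def setPow (L : LocalGroup G) (A : Set G) (n : ℕ) : Set G :=
  {b | ∃ l : List G, l.length = n ∧ (∀ a ∈ l, a ∈ A) ∧ L.Represents l b}

/-- A chain `U₁ ⊇ U₂ ⊇ ⋯` of symmetric open neighborhoods of `1` such that products of `n`
elements of `Uₙ` are defined (the sets `𝒰ₙ` of the paper). -/
def IsProdChain (L : LocalGroup G) (U : ℕ → Set G) : Prop :=
  ∀ n : ℕ, 1 ≤ n →
    IsOpen (U n) ∧ L.one ∈ U n ∧ L.IsSymmetric (U n) ∧ U (n + 1) ⊆ U n ∧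
      ∀ l : List G, l.length = n → (∀ a ∈ l, a ∈ U n) → ∃ b, L.Represents l b

/-- `a^k` is defined and equal to `b`, for `k : ℤ` (with `a^(-n) := (a⁻¹)^n`). -/
def zpowRep (L : LocalGroup G) (a : G) : ℤ → G → Prop
  | Int.ofNat n, b => L.Represents (List.replicate n a) b
  | Int.negSucc n, b => L.Represents (List.replicate (n + 1) (L.inv a)) b

/-- A special neighborhood (relative to a product chain `U`): a compact symmetric
neighborhood of `1` contained in `U 2`, containing no nontrivial subgroup, on which
squaring is injective. -/
def IsSpecialNbhd (L : LocalGroup G) (U : ℕ → Set G) (SU : Set G) : Prop :=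
  IsCompact SU ∧ SU ∈ 𝓝 L.one ∧ L.IsSymmetric SU ∧ SU ⊆ U 2 ∧
    (∀ H : Set G, L.IsSubgroup H → H ⊆ SU → H = {L.one}) ∧
    ∀ x ∈ SU, ∀ y ∈ SU, L.mul x x = L.mul y y → x = y

/-- `Λ_U` for the restriction `G|U`. -/
def restLambda (L : LocalGroup G) (U : Set G) : Set G := L.Lambda ∩ U ∩ L.inv ⁻¹' U

/-- `Ω_U` for the restriction `G|U`. -/
def restOmega (L : LocalGroup G) (U : Set G) : Set (G × G) :=
  {q | q ∈ L.Omega ∧ q.1 ∈ U ∧ q.2 ∈ U ∧ L.mul q.1 q.2 ∈ U}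

/-- A morphism of local groups `L → L'`. -/
def IsMorphism (L : LocalGroup G) (L' : LocalGroup G') (f : G → G') : Prop :=
  Continuous f ∧ f L.one = L'.one ∧
    (∀ x ∈ L.Lambda, f x ∈ L'.Lambda ∧ f (L.inv x) = L'.inv (f x)) ∧
    ∀ x y : G, (x, y) ∈ L.Omega → ((f x, f y) ∈ L'.Omega ∧ f (L.mul x y) = L'.mul (f x) (f y))

/-- `f` is a morphism of local groups `G|U → G'|U'` between restrictions. -/
def IsRestMorphism (L : LocalGroup G) (L' : LocalGroup G') (U : Set G) (U' : Set G')
    (f : G → G') : Prop :=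
  ContinuousOn f U ∧ Set.MapsTo f U U' ∧ f L.one = L'.one ∧
    (∀ x ∈ L.restLambda U, f x ∈ L'.restLambda U' ∧ f (L.inv x) = L'.inv (f x)) ∧
    ∀ x y : G, (x, y) ∈ L.restOmega U →
      ((f x, f y) ∈ L'.restOmega U' ∧ f (L.mul x y) = L'.mul (f x) (f y))

/-- Local isomorphism: a homeomorphism between open neighborhoods of the identities which
is a morphism of restrictions in both directions. -/
def LocallyIsomorphic (L : LocalGroup G) (L' : LocalGroup G') : Prop :=
  ∃ (U : Set G) (U' : Set G') (f : G → G') (g : G' → G),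
    IsOpen U ∧ L.one ∈ U ∧ IsOpen U' ∧ L'.one ∈ U' ∧
      Set.BijOn f U U' ∧ (∀ x ∈ U, g (f x) = x) ∧ (∀ y ∈ U', f (g y) = y) ∧
      L.IsRestMorphism L' U U' f ∧ L'.IsRestMorphism L U' U g

/-- A topological group regarded as a local group with `Λ = G` and `Ω = G × G`. -/
def ofGroup (H : Type*) [TopologicalSpace H] [Group H] [IsTopologicalGroup H] : LocalGroup H where
  one := 1
  Lambda := Set.univ
  Omega := Set.univ
  inv := fun x => x⁻¹
  mul := fun x y => x * y
  isOpen_Lambda := isOpen_univ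
  isOpen_Omega := isOpen_univ
  one_mem_Lambda := trivial
  pair_one_left := fun _ => trivial
  pair_one_right := fun _ => trivial
  continuousOn_inv := continuous_inv.continuousOn
  continuousOn_mul := (continuous_fst.mul continuous_snd).continuousOn
  one_mul := fun x => _root_.one_mul x
  mul_one := fun x => _root_.mul_one x
  mem_inv_right := fun _ _ => trivial
  mem_inv_left := fun _ _ => trivial
  mul_inv_self := fun x _ => mul_inv_cancel x
  inv_mul_self := fun x _ => inv_mul_cancel x
  assoc := fun x y z _ _ _ _ => mul_assoc x y z

/-- A bundled (finite-dimensional, real) Lie group in the Mathlib sense. -/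
structure BundledLieGroup : Type 1 where
  n : ℕ
  carrier : Type
  [ts : TopologicalSpace carrier]
  [t2 : T2Space carrier]
  [grp : Group carrier]
  [tg : IsTopologicalGroup carrier]
  [cs : ChartedSpace (EuclideanSpace ℝ (Fin n)) carrier]
  [lie : LieGroup (𝓡 n) (⊤ : ℕ∞) carrier]

/-- `L` is locally isomorphic to (the local group underlying) a Lie group. -/
def IsLieLocallyIsomorphic (L : LocalGroup G) : Prop :=
  ∃ B : BundledLieGroup,
    letI := B.ts; letI := B.grp; letI := B.tg
    L.LocallyIsomorphic (ofGroup B.carrier)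

/-- A local one-parameter subgroup of `L`, with domain `(-r, r)` (where `r ∈ (0,∞]`). -/
structure LocalOnePS (L : LocalGroup G) where
  r : ℝ≥0∞
  r_pos : 0 < r
  toFun : ℝ → G
  mem_Lambda : ∀ t : ℝ, ENNReal.ofReal |t| < r → toFun t ∈ L.Lambda
  continuousOn : ContinuousOn toFun {t : ℝ | ENNReal.ofReal |t| < r}
  add : ∀ s t : ℝ, ENNReal.ofReal |s| < r → ENNReal.ofReal |t| < r →
    ENNReal.ofReal |s + t| < r →
      (toFun s, toFun t) ∈ L.Omega ∧ toFun (s + t) = L.mul (toFun s) (toFun t)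

variable {L : LocalGroup G}

/-- Equivalence (equality of germs at 0) of local one-parameter subgroups. -/
def OnePSEquiv (X Y : LocalOnePS L) : Prop :=
  ∃ s : ℝ, 0 < s ∧ ENNReal.ofReal s < X.r ∧ ENNReal.ofReal s < Y.r ∧
    ∀ t : ℝ, |t| < s → X.toFun t = Y.toFun t

theorem onePS_exists_small (X : LocalOnePS L) : ∃ s : ℝ, 0 < s ∧ ENNReal.ofReal s < X.r := by
  rcases eq_or_ne X.r ⊤ with h | h
  · exact ⟨1, one_pos, by simp [h]⟩
  · have h0 : X.r ≠ 0 := ne_of_gt X.r_pos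
    have htr : 0 < X.r.toReal := ENNReal.toReal_pos h0 h
    refine ⟨X.r.toReal / 2, by linarith, ?_⟩
    rw [ENNReal.ofReal_lt_iff_lt_toReal (by linarith) h]
    linarith

instance onePSSetoid (L : LocalGroup G) : Setoid (LocalOnePS L) where
  r := OnePSEquiv
  iseqv := by
    constructor
    · intro X
      obtain ⟨s, hs, hsr⟩ := onePS_exists_small X
      exact ⟨s, hs, hsr, hsr, fun _ _ => rfl⟩
    · rintro X Y ⟨s, hs, h1, h2, h3⟩
      exact ⟨s, hs, h2, h1, fun t ht => (h3 t ht).symm⟩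
    · rintro X Y Z ⟨s1, hs1, hX1, hY1, hag1⟩ ⟨s2, hs2, hY2, hZ2, hag2⟩
      refine ⟨min s1 s2, lt_min hs1 hs2, ?_, ?_, fun t ht => ?_⟩
      · exact lt_of_le_of_lt (ENNReal.ofReal_le_ofReal (min_le_left _ _)) hX1
      · exact lt_of_le_of_lt (ENNReal.ofReal_le_ofReal (min_le_right _ _)) hZ2
      · rw [hag1 t (lt_of_lt_of_le ht (min_le_left _ _)),
          hag2 t (lt_of_lt_of_le ht (min_le_right _ _))]

/-- `L(G)`: the set of germs at `0` of local one-parameter subgroups of `L`. -/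
abbrev LGQuot (L : LocalGroup G) := Quotient (onePSSetoid L)

/-- The trivial local one-parameter subgroup `O`. -/
noncomputable def constOnePS (L : LocalGroup G) : LocalOnePS L where
  r := ⊤
  r_pos := by simp
  toFun := fun _ => L.one
  mem_Lambda := fun _ _ => L.one_mem_Lambda
  continuousOn := continuousOn_const
  add := fun s t _ _ _ => ⟨L.pair_one_left L.one, (L.one_mul L.one).symm⟩

/-- The domain of a germ of local one-parameter subgroups: the union of the domains of its
representatives. -/
def germDomain (L : LocalGroup G) (X : LGQuot L) : Set ℝ :=
  {t | ∃ Y : LocalOnePS L, ⟦Y⟧ = X ∧ ENNReal.ofReal |t| < Y.r}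

/-- Evaluation of a germ at a point of its domain (junk value outside). This is
well defined, i.e. independent of the choice of representative, by the basic theory
of local one-parameter subgroups. -/
noncomputable def germEval (L : LocalGroup G) (X : LGQuot L) (t : ℝ) : G := by
  classical exact if h : ∃ Y : LocalOnePS L, ⟦Y⟧ = X ∧ ENNReal.ofReal |t| < Y.r then h.choose.toFun t
  else L.one

/-- The topology on `L(G)` generated by the subbasic sets `B_{C,U}` for `C ⊆ (-2,2)`
compact and `U ⊆ G` open. -/
instance germTopology (L : LocalGroup G) : TopologicalSpace (LGQuot L) :=
  TopologicalSpace.generateFrom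
    {S | ∃ (C : Set ℝ) (U : Set G), IsCompact C ∧ C ⊆ Set.Ioo (-2 : ℝ) 2 ∧ IsOpen U ∧
      S = {X : LGQuot L | C ⊆ germDomain L X ∧ ∀ t ∈ C, germEval L X t ∈ U}}

/-- A sublocal group `H` of `L`, with associated neighborhood `V`. -/
def IsSublocalGroup (L : LocalGroup G) (H V : Set G) : Prop :=
  L.one ∈ H ∧ IsOpen V ∧ L.one ∈ V ∧ H ⊆ V ∧ (∀ x ∈ closure H, x ∈ V → x ∈ H) ∧
    (∀ x ∈ H, x ∈ L.Lambda → L.inv x ∈ V → L.inv x ∈ H) ∧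
    ∀ x ∈ H, ∀ y ∈ H, (x, y) ∈ L.Omega → L.mul x y ∈ V → L.mul x y ∈ H

/-- A normal sublocal group `H` of `L`, with normalizing neighborhood `V`. -/
def IsNormalSublocalGroup (L : LocalGroup G) (H V : Set G) : Prop :=
  L.IsSublocalGroup H V ∧ L.IsSymmetric V ∧
    ∀ y ∈ V, ∀ x ∈ H, ∀ b : G, L.Represents [y, x, L.inv y] b → b ∈ V → b ∈ H

/-- The coset relation `E_H` on `W`. -/
def quotRel (L : LocalGroup G) (H W : Set G) : ↥W → ↥W → Prop :=
  fun x y => L.mul (L.inv ↑x) ↑y ∈ H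

/-- The local coset space `W/E_H`, with the quotient topology. -/
abbrev QuotCarrier (L : LocalGroup G) (H W : Set G) := Quot (L.quotRel H W)

/-- `Q` is the local quotient group structure `(G/H)_W` on `W/E_H`. -/
def IsQuotStructure (L : LocalGroup G) (H W : Set G) (h1W : L.one ∈ W)
    (Q : LocalGroup (L.QuotCarrier H W)) : Prop :=
  Q.one = Quot.mk (L.quotRel H W) ⟨L.one, h1W⟩ ∧
    Q.Lambda = Set.univ ∧
    (∀ (x : ↥W) (hx : L.inv ↑x ∈ W),
      Q.inv (Quot.mk (L.quotRel H W) x) = Quot.mk (L.quotRel H W) ⟨L.inv ↑x, hx⟩) ∧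
    Q.Omega = {q | ∃ x y : ↥W, ((x : G), (y : G)) ∈ L.Omega ∧ L.mul ↑x ↑y ∈ W ∧
      q = (Quot.mk (L.quotRel H W) x, Quot.mk (L.quotRel H W) y)} ∧
    ∀ (x y : ↥W) (_ : ((x : G), (y : G)) ∈ L.Omega) (hm : L.mul ↑x ↑y ∈ W),
      Q.mul (Quot.mk (L.quotRel H W) x) (Quot.mk (L.quotRel H W) y) =
        Quot.mk (L.quotRel H W) ⟨L.mul ↑x ↑y, hm⟩

/-- The sup-norm of a real-valued function. -/
noncomputable def supNorm (f : G → ℝ) : ℝ := ⨆ x : G, |f x|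

/-- `W²` = the set of products of two elements of `W`. -/
def sqSet (L : LocalGroup G) (W : Set G) : Set G :=
  {z | ∃ a ∈ W, ∃ b ∈ W, (a, b) ∈ L.Omega ∧ L.mul a b = z}

/-- The (left-translation) action `a · f` of `a` on functions supported in `W`:
`(a·f)(x) = f (a⁻¹ x)` for `x ∈ W²` and `0` otherwise. -/
noncomputable def act (L : LocalGroup G) (W : Set G) (a : G) (f : G → ℝ) : G → ℝ := by
  classical exact fun x => if x ∈ L.sqSet W then f (L.mul (L.inv a) x) else 0

/-- `ord(x) ≥ n` relative to the special neighborhood `SU`: all powers `x^k`, `|k| ≤ n`,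
are defined and lie in `SU`. -/
def ordGE (L : LocalGroup G) (SU : Set G) (n : ℕ) : Set G :=
  {x | ∀ k : ℤ, k.natAbs ≤ n → ∃ b : G, L.zpowRep x k b ∧ b ∈ SU}

end LocalGroup

open LocalGroup

/-!
Every germ in `𝒦` restricts to an additive map `h : [-1, 1] → 𝒰`, and conversely such a map
extends to a local one-parameter subgroup on `(-2, 2)` by `t ↦ h (t/2)²`, because `h (s/2)` and
`h (t/2)` commute. Since `𝒰` is compact and contains no nontrivial subgroup, the compact sets of
`x` such that `xᵏ ∈ 𝒰` for `|k| ≤ n` shrink to `{1}` as `n → ∞`; and `h u` lies in the `n`-th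
of them once `|u| (n + 1) ≤ 1`. So all these maps are equicontinuous at the interior points.
Hence a pointwise limit along an ultrafilter on `𝒦` is again such a map, the convergence is
uniform on compact subsets of `(-2, 2)`, and `𝒦` is compact. Injectivity of squaring on `𝒰`
recovers `X (2⁻ᵐ)` from `X 1`, additivity then `X` at all dyadic points and continuity `X`
itself, so `E` is injective; a continuous bijection from a compact space onto a Hausdorff one
is a homeomorphism.
-/

open Filter

theorem ofReal_abs_div_two_lt {t : ℝ} {r : ℝ≥0∞} (h : ENNReal.ofReal |t| < r) :
    ENNReal.ofReal |t / 2| < r :=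
  (ENNReal.ofReal_le_ofReal (by rw [abs_div, abs_two]; linarith [abs_nonneg t])).trans_lt h

theorem abs_floor_mul_two_pow_mul_inv_le {t : ℝ} (ht : |t| ≤ 1) (m : ℕ) :
    |(⌊t * 2 ^ m⌋ : ℝ) * (2 ^ m)⁻¹| ≤ 1 := by
  have hpow := pow_pos (two_pos (α := ℝ)) m
  have hlow : ((-2 ^ m : ℤ) : ℝ) ≤ t * 2 ^ m := by push_cast; nlinarith [abs_le.1 ht]
  have hlow' : -(2 : ℝ) ^ m ≤ ⌊t * 2 ^ m⌋ := by
    exact_mod_cast (Int.le_floor (z := -2 ^ m) (a := t * 2 ^ m)).2 hlow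
  have hup : (⌊t * 2 ^ m⌋ : ℝ) ≤ 2 ^ m :=
    (Int.floor_le _).trans (by nlinarith [abs_le.1 ht])
  rw [abs_mul, abs_inv, abs_pow, abs_two, ← div_eq_mul_inv, div_le_one (by positivity), abs_le]
  exact ⟨hlow', hup⟩

theorem tendsto_floor_mul_two_pow_mul_inv (t : ℝ) :
    Tendsto (fun m : ℕ => (⌊t * 2 ^ m⌋ : ℝ) * (2 ^ m)⁻¹) atTop (𝓝 t) := by
  have hinv : Tendsto (fun m : ℕ => ((2 : ℝ) ^ m)⁻¹) atTop (𝓝 0) :=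
    tendsto_inv_atTop_zero.comp (tendsto_pow_atTop_atTop_of_one_lt one_lt_two)
  refine tendsto_of_tendsto_of_tendsto_of_le_of_le (by simpa using hinv.const_sub t)
    tendsto_const_nhds (fun m => ?_) (fun m => ?_)
  · have := Int.lt_floor_add_one (t * 2 ^ m)
    have h2 : (0 : ℝ) < (2 ^ m)⁻¹ := by positivity
    calc t - ((2 : ℝ) ^ m)⁻¹ = (t * 2 ^ m - 1) * (2 ^ m)⁻¹ := by field_simp
      _ ≤ _ := by gcongr; linarith
  · calc (⌊t * 2 ^ m⌋ : ℝ) * (2 ^ m)⁻¹ ≤ (t * 2 ^ m) * (2 ^ m)⁻¹ := by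
          gcongr; exact Int.floor_le _
      _ = t := by field_simp

namespace LocalGroup

variable {G : Type*} [TopologicalSpace G] {L : LocalGroup G}

section Algebra

theorem represents_singleton {a b : G} : L.Represents [a] b ↔ b = a := by
  rw [Represents]

theorem Represents.split {a c b : G} {l : List G} (h : L.Represents (a :: c :: l) b) {i : ℕ}
    (hi₁ : 1 ≤ i) (hi : i < l.length + 2) :
    ∃ b₁ b₂, L.Represents ((a :: c :: l).take i) b₁ ∧ L.Represents ((a :: c :: l).drop i) b₂ ∧
      (b₁, b₂) ∈ L.Omega ∧ L.mul b₁ b₂ = b := by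
  rw [Represents] at h
  exact h i hi₁ hi

theorem Represents.pair {a c b : G} (h : L.Represents [a, c] b) :
    (a, c) ∈ L.Omega ∧ L.mul a c = b := by
  obtain ⟨b₁, b₂, h₁, h₂, hΩ, rfl⟩ := h.split le_rfl (by simp)
  obtain rfl := represents_singleton.1 h₁
  obtain rfl := represents_singleton.1 h₂
  exact ⟨hΩ, rfl⟩

theorem Represents.triple {a c d b : G} (h : L.Represents [a, c, d] b) :
    L.mul a (L.mul c d) = b := by
  obtain ⟨b₁, b₂, h₁, h₂, -, rfl⟩ := h.split le_rfl (by simp)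
  rw [represents_singleton.1 h₁, (Represents.pair h₂).2]

theorem Represents.quad {a c d e b : G} (h : L.Represents [a, c, d, e] b) :
    (L.mul a c, L.mul d e) ∈ L.Omega ∧ L.mul (L.mul a c) (L.mul d e) = b ∧
      L.mul (L.mul a (L.mul c d)) e = b := by
  obtain ⟨b₁, b₂, h₁, h₂, hΩ, rfl⟩ := h.split (i := 2) (by norm_num) (by simp)
  obtain ⟨c₁, c₂, h₃, h₄, -, hc⟩ := h.split (i := 3) (by norm_num) (by simp)
  simp only [List.take, List.drop] at h₁ h₂ h₃ h₄
  rw [← (Represents.pair h₁).2, ← (Represents.pair h₂).2] at hΩ hc ⊢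
  obtain rfl := represents_singleton.1 h₄
  rw [← h₃.triple] at hc
  exact ⟨hΩ, rfl, hc⟩

/-- The commutation `ab = ba` gives `a(ab) = a(ba)`, and both sides of the claim are two
bracketings of the products `aabb` and `abab`, which are defined. -/
theorem mul_self_mul_mul_self_of_comm {U : Set G}
    (hU : ∀ l : List G, l.length = 4 → (∀ a ∈ l, a ∈ U) → ∃ b, L.Represents l b)
    {a b : G} (ha : a ∈ U) (hb : b ∈ U) (hab : L.mul a b = L.mul b a) :
    (L.mul a a, L.mul b b) ∈ L.Omega ∧
      L.mul (L.mul a a) (L.mul b b) = L.mul (L.mul a b) (L.mul a b) := by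
  have hmem : ∀ l : List G, (∀ c ∈ l, c = a ∨ c = b) → ∀ c ∈ l, c ∈ U := fun l hl c hc => by
    rcases hl c hc with rfl | rfl <;> assumption
  obtain ⟨P, hP⟩ := hU [a, a, b, b] rfl (hmem _ (by simp))
  obtain ⟨Q, hQ⟩ := hU [a, b, a, b] rfl (hmem _ (by simp))
  obtain ⟨hΩ, hP₁, hP₂⟩ := hP.quad
  obtain ⟨-, hQ₁, hQ₂⟩ := hQ.quad
  rw [← hab] at hQ₂
  exact ⟨hΩ, hP₁.trans (hP₂.symm.trans (hQ₂.trans hQ₁.symm))⟩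

theorem inv_eq_of_mul_eq_one {x y : G} (hx : x ∈ L.Lambda) (hxy : (x, y) ∈ L.Omega)
    (h : L.mul x y = L.one) : L.inv x = y := by
  have := L.assoc (L.inv x) x y (L.mem_inv_left x hx) hxy
    (by rw [L.inv_mul_self x hx]; exact L.pair_one_left y) (by rw [h]; exact L.pair_one_right _)
  rwa [L.inv_mul_self x hx, L.one_mul, h, L.mul_one, eq_comm] at this

theorem eq_one_of_mul_self_eq {x : G} (hx : x ∈ L.Lambda) (hxx : (x, x) ∈ L.Omega)
    (h : L.mul x x = x) : x = L.one := by
  have := L.assoc (L.inv x) x x (L.mem_inv_left x hx) hxx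
    (by rw [L.inv_mul_self x hx]; exact L.pair_one_left x) (by rw [h]; exact L.mem_inv_left x hx)
  rwa [L.inv_mul_self x hx, L.one_mul, h, L.inv_mul_self x hx] at this

theorem inv_inv_of_mem {x : G} (hx : x ∈ L.Lambda) (hx' : L.inv x ∈ L.Lambda) :
    L.inv (L.inv x) = x :=
  inv_eq_of_mul_eq_one hx' (L.mem_inv_left x hx) (L.inv_mul_self x hx)

end Algebra

section SpecialNbhd

variable {Un : ℕ → Set G} {S : Set G}

theorem IsSpecialNbhd.one_mem (hS : L.IsSpecialNbhd Un S) : L.one ∈ S :=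
  mem_of_mem_nhds hS.2.1

theorem IsSpecialNbhd.subset_Lambda (hS : L.IsSpecialNbhd Un S) : S ⊆ L.Lambda :=
  hS.2.2.1.1

theorem IsSpecialNbhd.inv_mem (hS : L.IsSpecialNbhd Un S) {x : G} (hx : x ∈ S) :
    L.inv x ∈ S :=
  hS.2.2.1.2 ▸ Set.mem_image_of_mem _ hx

theorem IsSpecialNbhd.inv_inv (hS : L.IsSpecialNbhd Un S) {x : G} (hx : x ∈ S) :
    L.inv (L.inv x) = x :=
  inv_inv_of_mem (hS.subset_Lambda hx) (hS.subset_Lambda (hS.inv_mem hx))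

theorem IsSpecialNbhd.mem_Omega (hUn : L.IsProdChain Un) (hS : L.IsSpecialNbhd Un S) {a b : G}
    (ha : a ∈ S) (hb : b ∈ S) : (a, b) ∈ L.Omega := by
  obtain ⟨c, hc⟩ := (hUn 2 (by norm_num)).2.2.2.2 [a, b] rfl (by
    simp only [List.mem_cons, List.not_mem_nil, or_false, forall_eq_or_imp, forall_eq]
    exact ⟨hS.2.2.2.1 ha, hS.2.2.2.1 hb⟩)
  exact hc.pair.1

theorem IsSpecialNbhd.mul_assoc (hUn : L.IsProdChain Un) (hS : L.IsSpecialNbhd Un S)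
    {a b c : G} (ha : a ∈ S) (hb : b ∈ S) (hc : c ∈ S) (hab : L.mul a b ∈ S)
    (hbc : L.mul b c ∈ S) : L.mul (L.mul a b) c = L.mul a (L.mul b c) :=
  L.assoc a b c (hS.mem_Omega hUn ha hb) (hS.mem_Omega hUn hb hc) (hS.mem_Omega hUn hab hc)
    (hS.mem_Omega hUn ha hbc)

theorem IsSpecialNbhd.continuousOn_inv (hS : L.IsSpecialNbhd Un S) : ContinuousOn L.inv S :=
  L.continuousOn_inv.mono hS.subset_Lambda

theorem IsSpecialNbhd.continuousAt_mul (hUn : L.IsProdChain Un) (hS : L.IsSpecialNbhd Un S)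
    {a b : G} (ha : a ∈ S) (hb : b ∈ S) :
    ContinuousAt (fun q : G × G => L.mul q.1 q.2) (a, b) :=
  L.continuousOn_mul.continuousAt (L.isOpen_Omega.mem_nhds (hS.mem_Omega hUn ha hb))

end SpecialNbhd

def npow (L : LocalGroup G) (x : G) : ℕ → G
  | 0 => L.one
  | n + 1 => L.mul (L.npow x n) x

def zpow (L : LocalGroup G) (x : G) : ℤ → G
  | Int.ofNat n => L.npow x n
  | Int.negSucc n => L.npow (L.inv x) (n + 1)

section Powers

theorem npow_one (x : G) : L.npow x 1 = x := L.one_mul x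

theorem zpow_natCast (x : G) (n : ℕ) : L.zpow x n = L.npow x n := rfl

theorem zpow_neg {x : G} (hx : L.inv (L.inv x) = x) (k : ℤ) :
    L.zpow x (-k) = L.zpow (L.inv x) k := by
  rcases k with (_ | n) | n
  · rfl
  · rfl
  · show L.npow x (n + 1) = L.npow (L.inv (L.inv x)) (n + 1)
    rw [hx]

variable {Un : ℕ → Set G} {S : Set G} (hUn : L.IsProdChain Un) (hS : L.IsSpecialNbhd Un S)
  {x : G}

include hUn hS

theorem zpow_add_one (hx : ∀ k, L.zpow x k ∈ S) (k : ℤ) :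
    L.zpow x (k + 1) = L.mul (L.zpow x k) x := by
  have hx₁ : x ∈ S := npow_one (L := L) x ▸ hx 1
  have hinv (n : ℕ) : L.npow (L.inv x) n = L.zpow x (-n) := by
    rw [zpow_neg (hS.inv_inv hx₁), zpow_natCast]
  rcases k with n | n
  · rfl
  · rw [show Int.negSucc n + 1 = -(n : ℤ) by omega, ← hinv]
    show _ = L.mul (L.mul (L.npow (L.inv x) n) (L.inv x)) x
    have hl := hS.subset_Lambda hx₁
    rw [hS.mul_assoc hUn (hinv n ▸ hx _) (hS.inv_mem hx₁) hx₁ (hx (Int.negSucc n))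
      (L.inv_mul_self x hl ▸ hS.one_mem), L.inv_mul_self x hl, L.mul_one]

theorem zpow_sub_one (hx : ∀ k, L.zpow x k ∈ S) (k : ℤ) :
    L.zpow x (k - 1) = L.mul (L.zpow x k) (L.inv x) := by
  have hx₁ : x ∈ S := npow_one (L := L) x ▸ hx 1
  have hneg (k : ℤ) : L.zpow (L.inv x) k = L.zpow x (-k) := (zpow_neg (hS.inv_inv hx₁) k).symm
  rw [← neg_neg (k - 1), zpow_neg (hS.inv_inv hx₁), show -(k - 1) = -k + 1 by ring,
    zpow_add_one hUn hS (fun k => hneg k ▸ hx _), hneg, neg_neg]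

theorem zpow_add (hx : ∀ k, L.zpow x k ∈ S) (i j : ℤ) :
    L.zpow x (i + j) = L.mul (L.zpow x i) (L.zpow x j) := by
  have hx₁ : x ∈ S := npow_one (L := L) x ▸ hx 1
  induction j using Int.induction_on with
  | zero => rw [add_zero]; exact (L.mul_one _).symm
  | succ j ih =>
    rw [← add_assoc, zpow_add_one hUn hS hx, ih, zpow_add_one hUn hS hx,
      hS.mul_assoc hUn (hx i) (hx j) hx₁ (ih ▸ hx _) (zpow_add_one hUn hS hx j ▸ hx _)]
  | pred j ih =>
    rw [← add_sub_assoc, zpow_sub_one hUn hS hx, ih, zpow_sub_one hUn hS hx,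
      hS.mul_assoc hUn (hx i) (hx _) (hS.inv_mem hx₁) (ih ▸ hx _)
        (zpow_sub_one hUn hS hx _ ▸ hx _)]

theorem inv_zpow (hx : ∀ k, L.zpow x k ∈ S) (k : ℤ) : L.inv (L.zpow x k) = L.zpow x (-k) :=
  inv_eq_of_mul_eq_one (hS.subset_Lambda (hx k)) (hS.mem_Omega hUn (hx k) (hx _))
    (by rw [← zpow_add hUn hS hx, add_neg_cancel]; rfl)

end Powers

/-- The paper's `ord x ≥ n`, relative to `S`. -/
def powersIn (L : LocalGroup G) (S : Set G) (n : ℕ) : Set G :=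
  {x | ∀ j ≤ n, L.npow x j ∈ S ∧ L.npow (L.inv x) j ∈ S}

theorem powersIn_antitone (S : Set G) : Antitone (L.powersIn S) :=
  fun _ _ hnm _ hx j hj => hx j (hj.trans hnm)

theorem zpow_mem_of_forall_mem_powersIn {S : Set G} {x : G} (hx : ∀ n, x ∈ L.powersIn S n)
    (k : ℤ) : L.zpow x k ∈ S := by
  rcases k with n | n
  · exact (hx n n le_rfl).1
  · exact (hx (n + 1) (n + 1) le_rfl).2

section Escape

variable {Un : ℕ → Set G} {S : Set G} (hUn : L.IsProdChain Un) (hS : L.IsSpecialNbhd Un S)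

include hUn hS

theorem continuousOn_npow_succ (n : ℕ) :
    ContinuousOn (fun x => L.npow x (n + 1)) (S ∩ {x | ∀ j ≤ n, L.npow x j ∈ S}) := by
  induction n with
  | zero => exact continuousOn_id.congr fun x _ => npow_one x
  | succ n ih =>
    have hpair : ContinuousOn (fun x => (L.npow x (n + 1), x))
        (S ∩ {x | ∀ j ≤ n + 1, L.npow x j ∈ S}) :=
      (ih.mono fun x hx => ⟨hx.1, fun j hj => hx.2 j (by omega)⟩).prodMk continuousOn_id
    exact L.continuousOn_mul.comp hpair fun x hx => hS.mem_Omega hUn (hx.2 _ le_rfl) hx.1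

variable [T2Space G]

theorem isSubgroup_closure {Z : Set G} (hZS : Z ⊆ S) (h1 : L.one ∈ Z)
    (hmul : ∀ a ∈ Z, ∀ b ∈ Z, L.mul a b ∈ Z) (hinv : ∀ a ∈ Z, L.inv a ∈ Z) :
    L.IsSubgroup (closure Z) := by
  have hcl : closure Z ⊆ S := closure_minimal hZS hS.1.isClosed
  refine ⟨subset_closure h1, hcl.trans hS.subset_Lambda,
    fun a ha b hb => hS.mem_Omega hUn (hcl ha) (hcl hb), fun a ha => ?_, fun a ha b hb => ?_⟩
  · exact closure_mono (Set.image_subset_iff.2 hinv)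
      ((hS.continuousOn_inv.mono hcl).image_closure ⟨a, ha, rfl⟩)
  · have hc : ContinuousOn (fun q : G × G => L.mul q.1 q.2) (closure (Z ×ˢ Z)) :=
      L.continuousOn_mul.mono fun q hq => by
        rw [closure_prod_eq] at hq
        exact hS.mem_Omega hUn (hcl hq.1) (hcl hq.2)
    have hab : (a, b) ∈ closure (Z ×ˢ Z) := by rw [closure_prod_eq]; exact ⟨ha, hb⟩
    refine closure_mono ?_ (hc.image_closure ⟨(a, b), hab, rfl⟩)
    rintro _ ⟨q, hq, rfl⟩
    exact hmul _ hq.1 _ hq.2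

/-- The closure of the cyclic group generated by `x` is a subgroup inside `S`. -/
theorem eq_one_of_forall_zpow_mem {x : G} (hx : ∀ k, L.zpow x k ∈ S) : x = L.one := by
  have hZS : Set.range (L.zpow x) ⊆ S := Set.range_subset_iff.2 hx
  have hsub := isSubgroup_closure hUn hS hZS ⟨0, rfl⟩
    (by rintro _ ⟨i, rfl⟩ _ ⟨j, rfl⟩; exact ⟨i + j, zpow_add hUn hS hx i j⟩)
    (by rintro _ ⟨i, rfl⟩; exact ⟨-i, (inv_zpow hUn hS hx i).symm⟩)
  have hx₁ : x ∈ closure (Set.range (L.zpow x)) := subset_closure ⟨1, npow_one (L := L) x⟩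
  rwa [hS.2.2.2.2.1 _ hsub (closure_minimal hZS hS.1.isClosed)] at hx₁

theorem isClosed_inter_npow (n : ℕ) : IsClosed (S ∩ {x | ∀ j ≤ n, L.npow x j ∈ S}) := by
  induction n with
  | zero =>
    rw [Set.inter_eq_left.2 fun x _ j hj => by rw [Nat.le_zero.1 hj]; exact hS.one_mem]
    exact hS.1.isClosed
  | succ n ih =>
    convert (continuousOn_npow_succ hUn hS n).preimage_isClosed_of_isClosed ih hS.1.isClosed
      using 1
    ext x
    simp only [Set.mem_inter_iff, Set.mem_ofPred_eq, Set.mem_preimage, Nat.le_succ_iff]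
    constructor
    · rintro ⟨hxS, h⟩
      exact ⟨⟨hxS, fun j hj => h j (Or.inl hj)⟩, h _ (Or.inr rfl)⟩
    · rintro ⟨⟨hxS, h⟩, h'⟩
      exact ⟨hxS, fun j hj => hj.elim (h j) (· ▸ h')⟩

theorem isClosed_inter_powersIn (n : ℕ) : IsClosed (S ∩ L.powersIn S n) := by
  have hA := isClosed_inter_npow hUn hS n
  convert hA.inter (hS.continuousOn_inv.preimage_isClosed_of_isClosed hS.1.isClosed hA) using 1
  ext x
  simp only [powersIn, Set.mem_inter_iff, Set.mem_ofPred_eq, Set.mem_preimage]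
  constructor
  · rintro ⟨hxS, h⟩
    exact ⟨⟨hxS, fun j hj => (h j hj).1⟩, hxS, hS.inv_mem hxS, fun j hj => (h j hj).2⟩
  · rintro ⟨⟨hxS, h⟩, -, -, h'⟩
    exact ⟨hxS, fun j hj => ⟨h j hj, h' j hj⟩⟩

/-- The compact sets `S ∩ powersIn S n` decrease to `{1}`, so one of them avoids any closed
set missing `1`. -/
theorem exists_powersIn_subset {V : Set G} (hV : V ∈ 𝓝 L.one) : ∃ n, L.powersIn S n ⊆ V := by
  obtain ⟨W, hWV, hWo, h1W⟩ := mem_nhds_iff.1 hV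
  obtain ⟨n, hn⟩ := hS.1.elim_directed_family_closed (fun n => S ∩ L.powersIn S n ∩ Wᶜ)
    (fun n => (isClosed_inter_powersIn hUn hS n).inter hWo.isClosed_compl)
    (Set.eq_empty_of_forall_notMem fun x ⟨_, hx⟩ => by
      have hx' := Set.mem_iInter.1 hx
      have hx₁ := eq_one_of_forall_zpow_mem hUn hS
        (zpow_mem_of_forall_mem_powersIn fun n => (hx' n).1.2)
      exact (hx' 0).2 (hx₁ ▸ h1W))
    (Antitone.directed_ge fun n m hnm => Set.inter_subset_inter_left _
      (Set.inter_subset_inter_right _ (powersIn_antitone S hnm)))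
  refine ⟨n + 1, fun x hx => hWV (by_contra fun hxW => ?_)⟩
  have hxS : x ∈ S := npow_one (L := L) x ▸ (hx 1 (by omega)).1
  exact hn.subset ⟨hxS, ⟨hxS, powersIn_antitone S n.le_succ hx⟩, hxW⟩

end Escape

/-- Continuity is not assumed: for a special neighbourhood `S` it is automatic. -/
structure IsOnePSOnIcc (L : LocalGroup G) (S : Set G) (h : ℝ → G) : Prop where
  mem : ∀ t, |t| ≤ 1 → h t ∈ S
  map_add : ∀ s t, |s| ≤ 1 → |t| ≤ 1 → |s + t| ≤ 1 → h (s + t) = L.mul (h s) (h t)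

namespace IsOnePSOnIcc

variable {Un : ℕ → Set G} {S : Set G} (hUn : L.IsProdChain Un) (hS : L.IsSpecialNbhd Un S)
  {h : ℝ → G}

include hUn hS

theorem map_zero (hh : L.IsOnePSOnIcc S h) : h 0 = L.one := by
  have h0 := hh.mem 0 (by simp)
  refine eq_one_of_mul_self_eq (hS.subset_Lambda h0) (hS.mem_Omega hUn h0 h0) ?_
  simpa using (hh.map_add 0 0 (by simp) (by simp) (by simp)).symm

theorem map_neg (hh : L.IsOnePSOnIcc S h) {t : ℝ} (ht : |t| ≤ 1) : h (-t) = L.inv (h t) := by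
  have hnt : |-t| ≤ 1 := by rwa [abs_neg]
  refine (inv_eq_of_mul_eq_one (hS.subset_Lambda (hh.mem t ht))
    (hS.mem_Omega hUn (hh.mem t ht) (hh.mem _ hnt)) ?_).symm
  rw [← hh.map_add t (-t) ht hnt (by simp), add_neg_cancel, hh.map_zero hUn hS]

theorem npow_eq (hh : L.IsOnePSOnIcc S h) {u : ℝ} {n : ℕ} (hn : |n * u| ≤ 1) :
    L.npow (h u) n = h (n * u) := by
  induction n with
  | zero => rw [Nat.cast_zero, zero_mul, hh.map_zero hUn hS]; rfl
  | succ n ih =>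
    push_cast at hn ⊢
    have hle : |(n : ℝ) * u| ≤ |(n + 1) * u| ∧ |u| ≤ |(n + 1) * u| := by
      rw [abs_mul, abs_mul, Nat.abs_cast, abs_of_pos (Nat.cast_add_one_pos (α := ℝ) n)]
      constructor <;> nlinarith [abs_nonneg u, (Nat.cast_nonneg n : (0 : ℝ) ≤ n)]
    rw [add_one_mul, hh.map_add _ _ (hle.1.trans hn) (hle.2.trans hn) (by rwa [← add_one_mul]),
      ← ih (hle.1.trans hn)]
    rfl

theorem mem_powersIn (hh : L.IsOnePSOnIcc S h) {u : ℝ} {n : ℕ} (hu : |u| * (n + 1) ≤ 1) :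
    h u ∈ L.powersIn S n := by
  intro j hj
  have hj' : |(j : ℝ) * u| ≤ 1 := by
    rw [abs_mul, Nat.abs_cast, mul_comm]
    refine le_trans ?_ hu
    gcongr
    exact_mod_cast hj.trans n.le_succ
  have hu1 : |u| ≤ 1 := le_trans (by nlinarith [abs_nonneg u, (n.cast_nonneg : (0 : ℝ) ≤ n)]) hu
  have hj'' : |(j : ℝ) * -u| ≤ 1 := by rwa [mul_neg, abs_neg]
  rw [← hh.map_neg hUn hS hu1, hh.npow_eq hUn hS hj', hh.npow_eq hUn hS hj'']
  exact ⟨hh.mem _ hj', hh.mem _ hj''⟩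

/-- Equicontinuity at interior points: writing `h t = h t₀ · h (t - t₀)`, the second factor
lies in `powersIn S n` as soon as `|t - t₀| (n + 1) ≤ 1`, uniformly in `h`. -/
theorem tendsto_prod [T2Space G] {ι : Type*} {F : Filter ι} {hs : ι → ℝ → G}
    (hhs : ∀ᶠ i in F, L.IsOnePSOnIcc S (hs i)) {t₀ : ℝ} (ht₀ : |t₀| < 1) {y : G}
    (hy : Tendsto (fun i => hs i t₀) F (𝓝 y)) :
    Tendsto (fun p : ι × ℝ => hs p.1 p.2) (F ×ˢ 𝓝 t₀) (𝓝 y) := by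
  intro U hU
  have hmul : Tendsto (fun q : G × G => L.mul q.1 q.2) (𝓝 (y, L.one)) (𝓝 y) := by
    simpa only [L.mul_one] using (L.continuousOn_mul.continuousAt
      (L.isOpen_Omega.mem_nhds (L.pair_one_right y))).tendsto
  obtain ⟨A, hA, B, hB, hAB⟩ := mem_nhds_prod_iff.1 (hmul hU)
  obtain ⟨n, hn⟩ := exists_powersIn_subset hUn hS hB
  have hnear : ∀ᶠ t in 𝓝 t₀, |t| < 1 ∧ |t - t₀| * (n + 1) < 1 :=
    (continuous_abs.tendsto t₀ |>.eventually_lt_const ht₀).and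
      (Tendsto.eventually_lt_const zero_lt_one (by
        simpa using ((continuous_id.sub continuous_const).abs.mul continuous_const).tendsto
          (f := fun t : ℝ => |t - t₀| * (n + 1)) t₀))
  refine mem_map.2 (((hhs.and (hy hA)).prod_mk hnear).mono ?_)
  rintro ⟨i, t⟩ ⟨⟨hi, hiA⟩, ht, htn⟩
  have hd : |t - t₀| ≤ 1 := by nlinarith [abs_nonneg (t - t₀), (n.cast_nonneg : (0 : ℝ) ≤ n)]
  have hsplit := hi.map_add t₀ (t - t₀) ht₀.le hd (by rw [add_sub_cancel]; exact ht.le)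
  rw [add_sub_cancel] at hsplit
  show hs i t ∈ U
  rw [hsplit]
  exact hAB (Set.mk_mem_prod hiA (hn (hi.mem_powersIn hUn hS htn.le)))

theorem continuousAt [T2Space G] (hh : L.IsOnePSOnIcc S h) {t : ℝ} (ht : |t| < 1) :
    ContinuousAt h t := by
  have := tendsto_prod hUn hS (F := pure ()) (hs := fun _ => h) (eventually_pure.2 hh) ht
    (tendsto_pure_nhds _ _)
  rwa [pure_prod, tendsto_map'_iff] at this

theorem of_tendsto [T2Space G] {ι : Type*} {F : Filter ι} [F.NeBot] {hs : ι → ℝ → G}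
    (hhs : ∀ᶠ i in F, L.IsOnePSOnIcc S (hs i))
    (hlim : ∀ t, |t| ≤ 1 → Tendsto (fun i => hs i t) F (𝓝 (h t))) : L.IsOnePSOnIcc S h := by
  have hmem (t : ℝ) (ht : |t| ≤ 1) : h t ∈ S :=
    hS.1.isClosed.mem_of_tendsto (hlim t ht) (hhs.mono fun i hi => hi.mem t ht)
  refine ⟨hmem, fun s t hs ht hst => tendsto_nhds_unique (hlim _ hst) ?_⟩
  refine ((hS.continuousAt_mul hUn (hmem s hs) (hmem t ht)).tendsto.comp
    ((hlim s hs).prodMk_nhds (hlim t ht))).congr' ?_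
  exact hhs.mono fun i hi => (hi.map_add s t hs ht hst).symm

/-- The extension `t ↦ h (t/2) h (t/2)` to `(-2, 2)`; additivity uses that `h (s/2)` and
`h (t/2)` commute, so `(h (s/2) h (t/2))² = h (s/2)² h (t/2)²`. -/
theorem exists_onePS [T2Space G] (hΛ : L.Lambda = Set.univ) (hS4 : S ⊆ Un 4)
    (hh : L.IsOnePSOnIcc S h) : ∃ P : LocalOnePS L, P.r = 2 ∧ ∀ t, |t| ≤ 1 → P.toFun t = h t := by
  have hhalf {t : ℝ} (ht : |t| < 2) : |t / 2| < 1 := by rw [abs_div, abs_two]; linarith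
  refine ⟨⟨2, by norm_num, fun t => L.mul (h (t / 2)) (h (t / 2)), fun _ _ => hΛ ▸ trivial,
    fun t ht => ?_, fun s t hs ht hst => ?_⟩, rfl, fun t ht => ?_⟩
  · rw [Set.mem_ofPred_eq, ENNReal.ofReal_lt_ofNat] at ht
    have hc : ContinuousAt (fun s : ℝ => h (s / 2)) t :=
      (hh.continuousAt hUn hS (hhalf ht)).comp (f := fun s : ℝ => s / 2)
        (continuous_id.div_const 2).continuousAt
    have hmem := hh.mem _ (hhalf ht).le
    exact ((hS.continuousAt_mul hUn hmem hmem).comp (f := fun s : ℝ => (h (s / 2), h (s / 2)))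
      (hc.prodMk hc)).continuousWithinAt
  · simp only [ENNReal.ofReal_lt_ofNat] at hs ht hst
    have hs' := (hhalf hs).le
    have ht' := (hhalf ht).le
    have hst' : |s / 2 + t / 2| ≤ 1 := by rw [← add_div]; exact (hhalf hst).le
    have hcomm : L.mul (h (s / 2)) (h (t / 2)) = L.mul (h (t / 2)) (h (s / 2)) := by
      rw [← hh.map_add _ _ hs' ht' hst', ← hh.map_add _ _ ht' hs' (by rwa [add_comm]),
        add_comm]
    obtain ⟨hΩ, hsq⟩ := mul_self_mul_mul_self_of_comm (hUn 4 (by norm_num)).2.2.2.2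
      (hS4 (hh.mem _ hs')) (hS4 (hh.mem _ ht')) hcomm
    refine ⟨hΩ, ?_⟩
    show L.mul (h ((s + t) / 2)) (h ((s + t) / 2)) = _
    rw [add_div, hh.map_add _ _ hs' ht' hst', hsq]
  · show L.mul (h (t / 2)) (h (t / 2)) = h t
    have ht' : |t / 2| ≤ 1 := by rw [abs_div, abs_two]; linarith [abs_nonneg t]
    rw [← hh.map_add _ _ ht' ht' (by rwa [add_halves]), add_halves]

/-- Injectivity of squaring on `S` forces agreement at `2⁻ᵐ`, additivity then at all dyadic
points of `[-1, 1]`, and continuity on `(-1, 1)`. -/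
theorem eqOn_Ioo [T2Space G] {g : ℝ → G} (hh : L.IsOnePSOnIcc S h) (hg : L.IsOnePSOnIcc S g)
    (h1 : h 1 = g 1) : Set.EqOn h g (Set.Ioo (-1) 1) := by
  have hinv_two_pow (m : ℕ) : |((2 : ℝ) ^ m)⁻¹| ≤ 1 := by
    rw [abs_inv, abs_pow, abs_two]; exact inv_le_one_of_one_le₀ (one_le_pow₀ one_le_two)
  have hdyad (m : ℕ) : h (2 ^ m)⁻¹ = g (2 ^ m)⁻¹ := by
    induction m with
    | zero => simpa using h1
    | succ m ih =>
      have hu := hinv_two_pow (m + 1)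
      have hsum : ((2 : ℝ) ^ (m + 1))⁻¹ + (2 ^ (m + 1))⁻¹ = (2 ^ m)⁻¹ := by
        rw [pow_succ]; ring
      have hsum' := hsum ▸ hinv_two_pow m
      refine hS.2.2.2.2.2 _ (hh.mem _ hu) _ (hg.mem _ hu) ?_
      rw [← hh.map_add _ _ hu hu hsum', ← hg.map_add _ _ hu hu hsum', hsum, ih]
  have hnat (m n : ℕ) (hn : |(n : ℝ) * (2 ^ m)⁻¹| ≤ 1) : h (n * (2 ^ m)⁻¹) = g (n * (2 ^ m)⁻¹) := by
    rw [← hh.npow_eq hUn hS hn, ← hg.npow_eq hUn hS hn, hdyad]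
  have hint (m : ℕ) (k : ℤ) (hk : |(k : ℝ) * (2 ^ m)⁻¹| ≤ 1) :
      h (k * (2 ^ m)⁻¹) = g (k * (2 ^ m)⁻¹) := by
    obtain ⟨n, rfl | rfl⟩ := Int.eq_nat_or_neg k
    · exact hnat m n hk
    · have hn : |(n : ℝ) * (2 ^ m)⁻¹| ≤ 1 := by rwa [Int.cast_neg, neg_mul, abs_neg] at hk
      rw [Int.cast_neg, Int.cast_natCast, neg_mul, hh.map_neg hUn hS hn, hg.map_neg hUn hS hn,
        hnat m n hn]
  intro t ht
  have habs : |t| < 1 := abs_lt.2 ht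
  have hlim := tendsto_floor_mul_two_pow_mul_inv t
  refine tendsto_nhds_unique ((hh.continuousAt hUn hS habs).tendsto.comp hlim) ?_
  exact ((hg.continuousAt hUn hS habs).tendsto.comp hlim).congr fun m =>
    (hint m _ (abs_floor_mul_two_pow_mul_inv_le habs.le m)).symm

end IsOnePSOnIcc

theorem LocalOnePS.map_half (P : LocalOnePS L) {u : ℝ} (hu : ENNReal.ofReal |u| < P.r) :
    P.toFun u = L.mul (P.toFun (u / 2)) (P.toFun (u / 2)) := by
  have hu2 := ofReal_abs_div_two_lt hu
  have := (P.add _ _ hu2 hu2 (by rwa [add_halves])).2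
  rwa [add_halves] at this

/-- Agreement near `0` spreads to the common domain by halving. -/
theorem LocalOnePS.eq_of_onePSEquiv {P Q : LocalOnePS L} (hPQ : OnePSEquiv P Q) {t : ℝ}
    (hP : ENNReal.ofReal |t| < P.r) (hQ : ENNReal.ofReal |t| < Q.r) : P.toFun t = Q.toFun t := by
  obtain ⟨s, hs, -, -, hag⟩ := hPQ
  obtain ⟨m, hm⟩ := pow_unbounded_of_one_lt (|t| / s) one_lt_two
  rw [div_lt_iff₀ hs] at hm
  induction m generalizing t with
  | zero => exact hag t (by simpa using hm)
  | succ m ih =>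
    rw [P.map_half hP, Q.map_half hQ, ih (ofReal_abs_div_two_lt hP) (ofReal_abs_div_two_lt hQ)
      (by rw [pow_succ] at hm; rw [abs_div, abs_two]; linarith)]

theorem germEval_of_mk_eq {X : LGQuot L} {P : LocalOnePS L} (hP : ⟦P⟧ = X) {t : ℝ}
    (ht : ENNReal.ofReal |t| < P.r) : germEval L X t = P.toFun t := by
  have hE : ∃ Q : LocalOnePS L, ⟦Q⟧ = X ∧ ENNReal.ofReal |t| < Q.r := ⟨P, hP, ht⟩
  rw [germEval, dif_pos hE]
  exact LocalOnePS.eq_of_onePSEquiv (Quotient.exact (hE.choose_spec.1.trans hP.symm))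
    hE.choose_spec.2 ht

theorem germEval_constOnePS (t : ℝ) : germEval L ⟦constOnePS L⟧ t = L.one :=
  germEval_of_mk_eq rfl ENNReal.ofReal_lt_top

theorem exists_mk_eq_le_r {X : LGQuot L} {P Q : LocalOnePS L} (hP : ⟦P⟧ = X) (hQ : ⟦Q⟧ = X) :
    ∃ R : LocalOnePS L, ⟦R⟧ = X ∧ P.r ≤ R.r ∧ Q.r ≤ R.r := by
  rcases le_total P.r Q.r with hle | hle
  · exact ⟨Q, hQ, hle, le_rfl⟩
  · exact ⟨P, hP, le_rfl, hle⟩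

theorem germEval_add {X : LGQuot L} {s t : ℝ} (hs : s ∈ germDomain L X)
    (ht : t ∈ germDomain L X) (hst : s + t ∈ germDomain L X) :
    germEval L X (s + t) = L.mul (germEval L X s) (germEval L X t) := by
  obtain ⟨P₁, hP₁, hr₁⟩ := hs
  obtain ⟨P₂, hP₂, hr₂⟩ := ht
  obtain ⟨P₃, hP₃, hr₃⟩ := hst
  obtain ⟨Q, hQ, h₁, h₂⟩ := exists_mk_eq_le_r hP₁ hP₂
  obtain ⟨R, hR, hQR, h₃⟩ := exists_mk_eq_le_r hQ hP₃
  have hsR := hr₁.trans_le (h₁.trans hQR)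
  have htR := hr₂.trans_le (h₂.trans hQR)
  have hstR := hr₃.trans_le h₃
  rw [germEval_of_mk_eq hR hsR, germEval_of_mk_eq hR htR, germEval_of_mk_eq hR hstR]
  exact (R.add s t hsR htR hstR).2

theorem germEval_eventuallyEq (P : LocalOnePS L) : germEval L ⟦P⟧ =ᶠ[𝓝 0] P.toFun := by
  have hopen : IsOpen {t : ℝ | ENNReal.ofReal |t| < P.r} :=
    isOpen_lt (ENNReal.continuous_ofReal.comp continuous_abs) continuous_const
  filter_upwards [hopen.mem_nhds (by simpa using P.r_pos)] with t ht
  exact germEval_of_mk_eq rfl ht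

theorem germ_ext {X Y : LGQuot L} (h : germEval L X =ᶠ[𝓝 0] germEval L Y) : X = Y := by
  induction X using Quotient.inductionOn with | h P => ?_
  induction Y using Quotient.inductionOn with | h Q => ?_
  have hPQ : P.toFun =ᶠ[𝓝 0] Q.toFun :=
    (germEval_eventuallyEq P).symm.trans (h.trans (germEval_eventuallyEq Q))
  obtain ⟨ε, hε, hball⟩ := Metric.eventually_nhds_iff.1 hPQ
  obtain ⟨sP, hsP, hsPr⟩ := onePS_exists_small P
  obtain ⟨sQ, hsQ, hsQr⟩ := onePS_exists_small Q
  refine Quotient.sound ⟨min ε (min sP sQ), lt_min hε (lt_min hsP hsQ),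
    (ENNReal.ofReal_le_ofReal ((min_le_right _ _).trans (min_le_left _ _))).trans_lt hsPr,
    (ENNReal.ofReal_le_ofReal ((min_le_right _ _).trans (min_le_right _ _))).trans_lt hsQr,
    fun t ht => hball ?_⟩
  rw [Real.dist_eq, sub_zero]
  exact ht.trans_le (min_le_left _ _)

/-- The paper's `𝒦` (for `S = 𝒰`). -/
def unitGerms (L : LocalGroup G) (S : Set G) : Set (LGQuot L) :=
  {X | Set.Icc (-1 : ℝ) 1 ⊆ germDomain L X ∧ ∀ t ∈ Set.Icc (-1 : ℝ) 1, germEval L X t ∈ S}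

section UnitGerms

variable {S : Set G}

theorem isOnePSOnIcc_germEval {X : LGQuot L} (hX : X ∈ L.unitGerms S) :
    L.IsOnePSOnIcc S (germEval L X) where
  mem t ht := hX.2 t (abs_le.1 ht)
  map_add _ _ hs ht hst :=
    germEval_add (hX.1 (abs_le.1 hs)) (hX.1 (abs_le.1 ht)) (hX.1 (abs_le.1 hst))

theorem continuous_germEval_one : Continuous fun X : L.unitGerms S => germEval L X 1 := by
  refine continuous_def.2 fun U hU => ?_
  have hB : IsOpen {X : LGQuot L | {(1 : ℝ)} ⊆ germDomain L X ∧
      ∀ t ∈ ({1} : Set ℝ), germEval L X t ∈ U} :=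
    TopologicalSpace.GenerateOpen.basic _ ⟨{1}, U, isCompact_singleton,
      Set.singleton_subset_iff.2 ⟨by norm_num, by norm_num⟩, hU, rfl⟩
  convert hB.preimage continuous_subtype_val using 1
  ext ⟨X, hX⟩
  simp only [Set.mem_preimage, Set.mem_ofPred_eq, Set.singleton_subset_iff,
    Set.mem_singleton_iff, forall_eq]
  exact ⟨fun h => ⟨hX.1 ⟨by norm_num, le_rfl⟩, h⟩, And.right⟩

theorem unitGerms_mem_nhds (hS : S ∈ 𝓝 L.one) :
    L.unitGerms S ∈ 𝓝 (⟦constOnePS L⟧ : LGQuot L) := by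
  have hB : IsOpen {X : LGQuot L | Set.Icc (-1 : ℝ) 1 ⊆ germDomain L X ∧
      ∀ t ∈ Set.Icc (-1 : ℝ) 1, germEval L X t ∈ interior S} :=
    TopologicalSpace.GenerateOpen.basic _ ⟨_, _, isCompact_Icc,
      fun t ht => ⟨by linarith [ht.1], by linarith [ht.2]⟩, isOpen_interior, rfl⟩
  refine mem_nhds_iff.2 ⟨_, fun X hX => ⟨hX.1, fun t ht => interior_subset (hX.2 t ht)⟩, hB,
    fun t _ => ⟨constOnePS L, rfl, ENNReal.ofReal_lt_top⟩, fun t _ => ?_⟩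
  rw [germEval_constOnePS]
  exact mem_interior_iff_mem_nhds.2 hS

variable [T2Space G] {Un : ℕ → Set G} (hUn : L.IsProdChain Un) (hS : L.IsSpecialNbhd Un S)

include hUn hS

theorem injOn_germEval_one : Set.InjOn (fun X => germEval L X 1) (L.unitGerms S) := by
  intro X hX Y hY h1
  have hnear : ∀ᶠ t in 𝓝 (0 : ℝ), t ∈ Set.Ioo (-1) 1 := Ioo_mem_nhds (by norm_num) (by norm_num)
  exact germ_ext (hnear.mono ((isOnePSOnIcc_germEval hX).eqOn_Ioo hUn hS
    (isOnePSOnIcc_germEval hY) h1))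

variable (hΛ : L.Lambda = Set.univ) (hS4 : S ⊆ Un 4)

include hΛ hS4

theorem exists_mk_eq_of_mem_unitGerms {X : LGQuot L} (hX : X ∈ L.unitGerms S) :
    ∃ P : LocalOnePS L, P.r = 2 ∧ ⟦P⟧ = X := by
  obtain ⟨P, hPr, hP⟩ := (isOnePSOnIcc_germEval hX).exists_onePS hUn hS hΛ hS4
  refine ⟨P, hPr, germ_ext ?_⟩
  have hnear : ∀ᶠ t in 𝓝 (0 : ℝ), |t| < 1 :=
    (continuous_abs.tendsto (0 : ℝ)).eventually_lt_const (by simp)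
  exact (germEval_eventuallyEq P).trans (hnear.mono fun t ht => hP t ht.le)

theorem germEval_of_mem_unitGerms {X : LGQuot L} (hX : X ∈ L.unitGerms S) {t : ℝ}
    (ht : |t| < 2) : t ∈ germDomain L X ∧
      germEval L X t = L.mul (germEval L X (t / 2)) (germEval L X (t / 2)) := by
  obtain ⟨P, hPr, rfl⟩ := exists_mk_eq_of_mem_unitGerms hUn hS hΛ hS4 hX
  have hr : ENNReal.ofReal |t| < P.r := by rwa [hPr, ENNReal.ofReal_lt_ofNat]
  refine ⟨⟨P, rfl, hr⟩, ?_⟩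
  rw [germEval_of_mk_eq rfl hr, germEval_of_mk_eq rfl (ofReal_abs_div_two_lt hr), P.map_half hr]

theorem tendsto_germEval_prod {F : Filter (LGQuot L)} (hF : ∀ᶠ X in F, X ∈ L.unitGerms S)
    {X₀ : LGQuot L} (hX₀ : X₀ ∈ L.unitGerms S)
    (hlim : ∀ t, |t| < 1 → Tendsto (fun X => germEval L X t) F (𝓝 (germEval L X₀ t)))
    {t₀ : ℝ} (ht₀ : |t₀| < 2) :
    Tendsto (fun p : LGQuot L × ℝ => germEval L p.1 p.2) (F ×ˢ 𝓝 t₀)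
      (𝓝 (germEval L X₀ t₀)) := by
  have ht₀' : |t₀ / 2| < 1 := by rw [abs_div, abs_two]; linarith
  have hhalf : Tendsto (fun p : LGQuot L × ℝ => germEval L p.1 (p.2 / 2)) (F ×ˢ 𝓝 t₀)
      (𝓝 (germEval L X₀ (t₀ / 2))) :=
    (IsOnePSOnIcc.tendsto_prod hUn hS (hF.mono fun X hX => isOnePSOnIcc_germEval hX) ht₀'
      (hlim _ ht₀')).comp (tendsto_id.prodMap ((continuous_id.div_const 2).tendsto t₀))
  have hmem := (isOnePSOnIcc_germEval hX₀).mem _ ht₀'.le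
  rw [(germEval_of_mem_unitGerms hUn hS hΛ hS4 hX₀ ht₀).2]
  refine ((hS.continuousAt_mul hUn hmem hmem).tendsto.comp (hhalf.prodMk_nhds hhalf)).congr' ?_
  have hnear : ∀ᶠ t in 𝓝 t₀, |t| < 2 := (continuous_abs.tendsto t₀).eventually_lt_const ht₀
  filter_upwards [hF.prod_mk hnear] with p hp
  exact (germEval_of_mem_unitGerms hUn hS hΛ hS4 hp.1 hp.2).2.symm

/-- On `𝒦`, pointwise convergence on `(-1, 1)` implies convergence in `L(G)`: by
equicontinuity it is uniform on compact subsets of `(-2, 2)`. -/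
theorem le_nhds_of_tendsto_germEval {F : Filter (LGQuot L)} (hF : ∀ᶠ X in F, X ∈ L.unitGerms S)
    {X₀ : LGQuot L} (hX₀ : X₀ ∈ L.unitGerms S)
    (hlim : ∀ t, |t| < 1 → Tendsto (fun X => germEval L X t) F (𝓝 (germEval L X₀ t))) :
    F ≤ 𝓝 X₀ := by
  refine (TopologicalSpace.tendsto_nhds_generateFrom_iff (m := id)).2 ?_
  rintro _ ⟨C, U, hC, hC2, hU, rfl⟩ ⟨-, hX₀U⟩
  have hC2' (t : ℝ) (ht : t ∈ C) : |t| < 2 := abs_lt.2 (hC2 ht)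
  have hloc (t : ℝ) (ht : t ∈ C) : ∀ᶠ p in F ×ˢ 𝓝 t, germEval L p.1 p.2 ∈ U :=
    tendsto_germEval_prod hUn hS hΛ hS4 hF hX₀ hlim (hC2' t ht) (hU.mem_nhds (hX₀U t ht))
  have hunif : ∀ᶠ X in F, ∀ᶠ t in 𝓝ˢ C, germEval L X t ∈ U :=
    Eventually.curry (hC.mem_prod_nhdsSet_of_forall hloc)
  filter_upwards [hunif, hF] with X hX hXK
  exact ⟨fun t ht => (germEval_of_mem_unitGerms hUn hS hΛ hS4 hXK (hC2' t ht)).1,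
    hX.self_of_nhdsSet⟩

/-- A limit `f` of `F` pointwise on `[-1, 1]` is again additive with values in `S`; its
extension to `(-2, 2)` is the limit of `F` in `L(G)`. -/
theorem isCompact_unitGerms : IsCompact (L.unitGerms S) := by
  refine isCompact_iff_ultrafilter_le_nhds.2 fun F hF => ?_
  have hFK : ∀ᶠ X in (F : Filter (LGQuot L)), X ∈ L.unitGerms S := le_principal_iff.1 hF
  have hex (t : ℝ) (ht : |t| ≤ 1) : ∃ y, Tendsto (fun X => germEval L X t) F (𝓝 y) :=
    (hS.1.ultrafilter_le_nhds (F.map _)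
      (le_principal_iff.2 (hFK.mono fun X hX => hX.2 t (abs_le.1 ht)))).imp fun _ h => h.2
  have : Nonempty G := ⟨L.one⟩
  choose! f hf using hex
  have hfps : L.IsOnePSOnIcc S f :=
    IsOnePSOnIcc.of_tendsto hUn hS (hFK.mono fun X hX => isOnePSOnIcc_germEval hX) hf
  obtain ⟨P, hPr, hPf⟩ := hfps.exists_onePS hUn hS hΛ hS4
  have hP (t : ℝ) (ht : |t| ≤ 1) : germEval L ⟦P⟧ t = f t := by
    rw [germEval_of_mk_eq rfl (by rw [hPr, ENNReal.ofReal_lt_ofNat]; linarith), hPf t ht]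
  have hPK : ⟦P⟧ ∈ L.unitGerms S :=
    ⟨fun t ht => ⟨P, rfl, by rw [hPr, ENNReal.ofReal_lt_ofNat]; linarith [abs_le.2 ht]⟩,
      fun t ht => hP t (abs_le.2 ht) ▸ hfps.mem t (abs_le.2 ht)⟩
  exact ⟨⟦P⟧, hPK, le_nhds_of_tendsto_germEval hUn hS hΛ hS4 hFK hPK
    fun t ht => hP t ht.le ▸ hf t ht.le⟩

end UnitGerms

end LocalGroup

theorem statement_5_general {G : Type*} [TopologicalSpace G] [T2Space G]
    (L : LocalGroup G) (hstd : L.Std) (Un : ℕ → Set G) (hUn : L.IsProdChain Un)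
    (SU : Set G) (hSU : L.IsSpecialNbhd Un SU) (hSU6 : SU ⊆ Un 6)
    (𝒦 : Set (LGQuot L))
    (h𝒦 : 𝒦 = {X : LGQuot L | Set.Icc (-1 : ℝ) 1 ⊆ germDomain L X ∧
      ∀ t ∈ Set.Icc (-1 : ℝ) 1, germEval L X t ∈ SU})
    (K : Set G) (hK : K = (fun X => germEval L X 1) '' 𝒦) :
    IsCompact 𝒦 ∧ 𝒦 ∈ 𝓝 (⟦constOnePS L⟧ : LGQuot L) ∧
      Set.BijOn (fun X => germEval L X 1) 𝒦 K ∧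
      ∃ e : ↥𝒦 ≃ₜ ↥K, ∀ x : ↥𝒦, (e x : G) = germEval L (↑x : LGQuot L) 1 := by
  have hSU4 : SU ⊆ Un 4 := fun x hx =>
    (hUn 4 (by norm_num)).2.2.2.1 ((hUn 5 (by norm_num)).2.2.2.1 (hSU6 hx))
  change 𝒦 = L.unitGerms SU at h𝒦
  subst h𝒦 hK
  have hcomp := isCompact_unitGerms hUn hSU hstd.1 hSU4
  have hbij := (injOn_germEval_one hUn hSU).bijOn_image
  have : CompactSpace (L.unitGerms SU) := isCompact_iff_compactSpace.1 hcomp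
  refine ⟨hcomp, unitGerms_mem_nhds hSU.2.1, hbij, ?_⟩
  have hcont : Continuous (hbij.equiv _) := continuous_germEval_one.subtype_mk _
  exact ⟨hcont.homeoOfEquivCompactToT2, fun _ => rfl⟩

/-- `𝒦` is a compact neighborhood of `O` in `L(G)` and the local exponential
map `E : 𝒦 → K` is a bijection and a homeomorphism onto `K`. -/
theorem statement_5 {G : Type*} [TopologicalSpace G] [T2Space G] [LocallyCompactSpace G]
    (L : LocalGroup G) (hstd : L.Std) (Un : ℕ → Set G) (hUn : L.IsProdChain Un)
    (hNSS : L.NSS) (SU : Set G) (hSU : L.IsSpecialNbhd Un SU) (hSU6 : SU ⊆ Un 6)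
    (𝒦 : Set (LGQuot L))
    (h𝒦 : 𝒦 = {X : LGQuot L | Set.Icc (-1 : ℝ) 1 ⊆ germDomain L X ∧
      ∀ t ∈ Set.Icc (-1 : ℝ) 1, germEval L X t ∈ SU})
    (K : Set G) (hK : K = (fun X => germEval L X 1) '' 𝒦) :
    IsCompact 𝒦 ∧ 𝒦 ∈ 𝓝 (⟦constOnePS L⟧ : LGQuot L) ∧
      Set.BijOn (fun X => germEval L X 1) 𝒦 K ∧
      ∃ e : ↥𝒦 ≃ₜ ↥K, ∀ x : ↥𝒦, (e x : G) = germEval L (↑x : LGQuot L) 1 :=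
  statement_5_general L hstd Un hUn SU hSU hSU6 𝒦 h𝒦 K hK
end

section
/- Let H be a topological group and X : ℝ → H a one-parameter subgroup (a continuous group homomorphism from the additive group ℝ to H). (1) If H₁ is a closed subgroup of H, then either X(ℝ) ⊆ H₁ or there is a neighborhood D of 0 in ℝ such that X(D) ∩ H₁ = {1}. (2) If X is nontrivial (not constantly 1), then there is a neighborhood D of 0 in ℝ on which X is injective. -/
open scoped Topology Manifold ENNReal

open LocalGroup

/-! The preimage under `X` of a closed subgroup is a closed subgroup of `ℝ`; if `0` were not
isolated in it, it would be dense, hence everything. Part (2) is part (1) for the trivial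
subgroup, since `X s = X t` exactly when `X (s - t) = 1`. -/

open Filter

theorem AddSubgroup.eq_top_or_eventually_eq_zero_of_isClosed {G : Type*} [AddCommGroup G]
    [LinearOrder G] [IsOrderedAddMonoid G] [TopologicalSpace G] [OrderTopology G] [Archimedean G]
    {S : AddSubgroup G} (hS : IsClosed (S : Set G)) :
    S = ⊤ ∨ ∀ᶠ x in 𝓝 0, x ∈ S → x = 0 := by
  refine or_iff_not_imp_right.2 fun h => ?_
  have hdense : Dense (S : Set G) := S.dense_of_not_isolated_zero fun ε hε => by
    obtain ⟨x, hx, hxε⟩ :=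
      ((not_eventually.1 h).and_eventually (Ioo_mem_nhds (neg_lt_zero.2 hε) hε)).exists
    obtain ⟨hxS, hx0⟩ := Classical.not_imp.1 hx
    exact ⟨|x|, abs_mem_iff.2 hxS, abs_pos.2 hx0, abs_lt.2 hxε⟩
  rw [← AddSubgroup.coe_eq_univ, ← hS.closure_eq, hdense.closure_eq]

theorem range_subset_or_eventually_eq_zero {G H : Type*} [AddCommGroup G] [LinearOrder G]
    [IsOrderedAddMonoid G] [TopologicalSpace G] [OrderTopology G] [Archimedean G] [Group H]
    [TopologicalSpace H] {X : G → H} (hX : Continuous X) (hadd : ∀ s t, X (s + t) = X s * X t)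
    {K : Subgroup H} (hK : IsClosed (K : Set H)) :
    Set.range X ⊆ K ∨ ∀ᶠ t in 𝓝 0, X t ∈ K → t = 0 := by
  let φ : G →+ Additive H := AddMonoidHom.mk' (fun t => Additive.ofMul (X t)) hadd
  refine (AddSubgroup.eq_top_or_eventually_eq_zero_of_isClosed
    (S := (Subgroup.toAddSubgroup K).comap φ) (hK.preimage hX)).imp ?_ id
  rintro h _ ⟨t, rfl⟩
  exact (AddSubgroup.eq_top_iff' _).1 h t

theorem exists_mem_nhds_injOn_of_eventually_eq_zero {G H : Type*} [AddGroup G]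
    [TopologicalSpace G] [IsTopologicalAddGroup G] [Group H] {X : G → H}
    (hadd : ∀ s t, X (s + t) = X s * X t) (hker : ∀ᶠ t in 𝓝 0, X t = 1 → t = 0) :
    ∃ D ∈ 𝓝 0, Set.InjOn X D := by
  obtain ⟨D, hD, hDsub⟩ := exists_nhds_half_neg hker
  refine ⟨D, hD, fun s hs t ht hst => sub_eq_zero.1 (hDsub s hs t ht ?_)⟩
  rw [← mul_eq_right, ← hadd, sub_add_cancel, hst]

theorem statement_11_general {H : Type*} [TopologicalSpace H] [Group H]
    [T2Space H] (X : ℝ → H) (hcont : Continuous X) (hzero : X 0 = 1)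
    (hadd : ∀ s t : ℝ, X (s + t) = X s * X t) :
    (∀ H₁ : Subgroup H, IsClosed (H₁ : Set H) →
        Set.range X ⊆ (H₁ : Set H) ∨ ∃ D ∈ 𝓝 (0 : ℝ), X '' D ∩ (H₁ : Set H) = {1}) ∧
      ((∃ t : ℝ, X t ≠ 1) → ∃ D ∈ 𝓝 (0 : ℝ), Set.InjOn X D) := by
  refine ⟨fun K hK => (range_subset_or_eventually_eq_zero hcont hadd hK).imp_right
    fun hD => ⟨_, hD, ?_⟩, fun ⟨t, ht⟩ => ?_⟩
  · refine Set.eq_singleton_iff_unique_mem.2 ⟨⟨⟨0, fun _ => rfl, hzero⟩, K.one_mem⟩, ?_⟩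
    rintro _ ⟨⟨s, hs, rfl⟩, hsK⟩
    rw [hs hsK, hzero]
  · have hbot : IsClosed ((⊥ : Subgroup H) : Set H) := by
      rw [Subgroup.coe_bot]; exact isClosed_singleton
    obtain hrange | hker := range_subset_or_eventually_eq_zero hcont hadd hbot
    · exact absurd (Subgroup.mem_bot.1 (hrange ⟨t, rfl⟩)) ht
    · exact exists_mem_nhds_injOn_of_eventually_eq_zero hadd
        (hker.mono fun s hs h1 => hs (Subgroup.mem_bot.2 h1))

/-- behavior of one-parameter subgroups of a topological group with respect
to closed subgroups, and local injectivity of nontrivial one-parameter subgroups. -/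
theorem statement_11 {H : Type*} [TopologicalSpace H] [Group H] [IsTopologicalGroup H]
    [T2Space H] (X : ℝ → H) (hcont : Continuous X) (hzero : X 0 = 1)
    (hadd : ∀ s t : ℝ, X (s + t) = X s * X t) :
    (∀ H₁ : Subgroup H, IsClosed (H₁ : Set H) →
        Set.range X ⊆ (H₁ : Set H) ∨ ∃ D ∈ 𝓝 (0 : ℝ), X '' D ∩ (H₁ : Set H) = {1}) ∧
      ((∃ t : ℝ, X t ≠ 1) → ∃ D ∈ 𝓝 (0 : ℝ), Set.InjOn X D) :=
  statement_11_general X hcont hzero hadd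
end
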